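/- arXiv:1308.0650 — 3 statements merged into one kernel-verified Lean document; each statement's English description precedes it below -/
import Mathlib

section
/- Let ψ be defined recursively via ψ(k) = (p∗u)(k) + (r∗n)(k), where n(k) depends on ψ(k) through a quantizer Q satisfying: |ψ| ≤ M+1 implies |Qψ − ψ| ≤ δ, and where r(0) = 0 (strict causality). If ‖p‖₁·‖u‖∞ + δ·‖r‖₁ ≤ M+1, then for all k ≥ 0, |n(k)| ≤ δ and |ψ(k)| ≤ M+1. -/
/-- Stability lemma for the nonlinear quantized loop: if
`‖p‖₁·‖u‖∞ + δ·‖r‖₁ ≤ M+1`, then the quantization error stays bounded by `δ`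
and the quantizer input stays in the no-overload range `[-(M+1), M+1]`. -/
theorem quantizer_loop_bounded (M δ : ℝ) (hM : 0 < M) (hδ : 0 < δ)
    (Q : ℝ → ℝ) (hQ : ∀ x : ℝ, |x| ≤ M + 1 → |Q x - x| ≤ δ)
    (p r u ψ n : ℕ → ℝ)
    (hp : Summable (fun k => |p k|))
    (hr : Summable (fun k => |r k|))
    (hr0 : r 0 = 0)
    (hu : BddAbove (Set.range fun k => |u k|))
    (hψ : ∀ k : ℕ, ψ k = (∑ i ∈ Finset.range (k+1), p i * u (k - i)) +
        (∑ i ∈ Finset.range (k+1), r i * n (k - i)))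
    (hn : ∀ k : ℕ, n k = Q (ψ k) - ψ k)
    (hbound : (∑' k, |p k|) * (⨆ k, |u k|) + δ * (∑' k, |r k|) ≤ M + 1) :
    ∀ k : ℕ, |n k| ≤ δ ∧ |ψ k| ≤ M + 1 := by
  intro k
  induction k using Nat.strong_induction_on with
  | _ k ih =>
    set U := ⨆ k, |u k| with hUdef
    have hU0 : 0 ≤ U := le_trans (abs_nonneg (u 0)) (le_ciSup hu 0)
    have hψk : |ψ k| ≤ M + 1 := by
      rw [hψ k]
      have h1 : |∑ i ∈ Finset.range (k+1), p i * u (k - i)|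
          ≤ (∑ i ∈ Finset.range (k+1), |p i|) * U := by
        rw [Finset.sum_mul]
        refine le_trans (Finset.abs_sum_le_sum_abs _ _) (Finset.sum_le_sum ?_)
        intro i _
        rw [abs_mul]
        exact mul_le_mul_of_nonneg_left (le_ciSup hu (k - i)) (abs_nonneg _)
      have h2 : |∑ i ∈ Finset.range (k+1), r i * n (k - i)|
          ≤ (∑ i ∈ Finset.range (k+1), |r i|) * δ := by
        rw [Finset.sum_mul]
        refine le_trans (Finset.abs_sum_le_sum_abs _ _) (Finset.sum_le_sum ?_)
        intro i hi
        rw [abs_mul]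
        rcases Nat.eq_zero_or_pos i with h0 | hpos
        · simp [h0, hr0]
        · have hlt : k - i < k := by
            have : i ≤ k := Nat.lt_succ_iff.mp (Finset.mem_range.mp hi)
            omega
          exact mul_le_mul_of_nonneg_left ((ih _ hlt).1) (abs_nonneg _)
      have hp1 : (∑ i ∈ Finset.range (k+1), |p i|) ≤ ∑' k, |p k| :=
        Summable.sum_le_tsum _ (fun _ _ => abs_nonneg _) hp
      have hr1 : (∑ i ∈ Finset.range (k+1), |r i|) ≤ ∑' k, |r k| :=
        Summable.sum_le_tsum _ (fun _ _ => abs_nonneg _) hr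
      calc |_ + _| ≤ _ + _ := abs_add_le _ _
        _ ≤ (∑' k, |p k|) * U + δ * (∑' k, |r k|) := by
            refine add_le_add (le_trans h1 ?_) (le_trans h2 ?_)
            · exact mul_le_mul_of_nonneg_right hp1 hU0
            · rw [mul_comm (∑ i ∈ Finset.range (k+1), |r i|) δ]
              exact mul_le_mul_of_nonneg_left hr1 hδ.le
        _ ≤ M + 1 := hbound
    exact ⟨by rw [hn k]; exact hQ _ hψk, hψk⟩
end

section
/- Parametrization of stabilizing loop-filters (one direction): if P is a stable causal rational transfer function and R is a stable strictly causal rational transfer function, then with H₁ = P/(1+R) and H₂ = R/(1+R), the four closed-loop transfer functions 1/(1−H₂) = 1+R, H₁/(1−H₂) = P, and H₂/(1−H₂) = R are all stable, and H₂ is strictly causal (well-posedness). -/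
/-- A rational transfer function is stable if all its poles (roots of the
denominator, over ℂ) lie in the open unit disk. -/
def TFStable (F : RatFunc ℝ) : Prop :=
  ∀ z : ℂ, (F.denom.map (algebraMap ℝ ℂ)).IsRoot z → ‖z‖ < 1

/-- Causal: numerator degree at most denominator degree. -/
def TFCausal (F : RatFunc ℝ) : Prop := F.num.degree ≤ F.denom.degree

/-- Strictly causal: numerator degree strictly less than denominator degree. -/
def TFStrictlyCausal (F : RatFunc ℝ) : Prop := F.num.degree < F.denom.degree

lemma strictlyCausal_iff_intDegree_neg {F : RatFunc ℝ} (hF : F ≠ 0) :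
    TFStrictlyCausal F ↔ F.intDegree < 0 := by
  have h1 : F.num ≠ 0 := RatFunc.num_ne_zero hF
  have h2 : F.denom ≠ 0 := F.denom_ne_zero
  rw [TFStrictlyCausal, RatFunc.intDegree, sub_neg,
    Polynomial.degree_eq_natDegree h1, Polynomial.degree_eq_natDegree h2]
  exact_mod_cast Iff.rfl

lemma intDegree_inv (F : RatFunc ℝ) (hF : F ≠ 0) :
    F⁻¹.intDegree = -F.intDegree := by
  have := RatFunc.intDegree_mul hF (inv_ne_zero hF)
  rw [mul_inv_cancel₀ hF, RatFunc.intDegree_one] at this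
  omega

/-- Parametrization of stabilizing loop-filters (forward direction): if
`P ∈ S` and `R ∈ S'`, then with `H₁ = P/(1+R)`, `H₂ = R/(1+R)`, the
closed-loop transfer functions satisfy `1/(1-H₂) = 1+R`, `H₁/(1-H₂) = P`,
`H₂/(1-H₂) = R`, are all stable and causal, and `H₂` is strictly causal. -/
theorem stabilizing_filters_forward (P R : RatFunc ℝ)
    (hPs : TFStable P) (hPc : TFCausal P)
    (hRs : TFStable R) (hRc : TFStrictlyCausal R)
    (hR1 : 1 + R ≠ 0)
    (H₁ H₂ : RatFunc ℝ) (hH₁ : H₁ = P / (1 + R)) (hH₂ : H₂ = R / (1 + R)) :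
    (1 - H₂) ≠ 0 ∧
    1 / (1 - H₂) = 1 + R ∧ H₁ / (1 - H₂) = P ∧ H₂ / (1 - H₂) = R ∧
    TFStrictlyCausal H₂ ∧
    TFStable (1 + R) ∧ TFCausal (1 + R) ∧
    TFStable P ∧ TFCausal P ∧ TFStable R ∧ TFCausal R := by
  have key : 1 - H₂ = (1 + R)⁻¹ := by
    rw [hH₂]
    field_simp
    ring
  have hne : (1 - H₂) ≠ 0 := by rw [key]; exact inv_ne_zero hR1
  refine ⟨hne, ?_, ?_, ?_, ?_, ?_, ?_, hPs, hPc, hRs, ?_⟩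
  · rw [key, one_div, inv_inv]
  · rw [key, hH₁]; field_simp
  · rw [key, hH₂]; field_simp
  · -- H₂ strictly causal
    by_cases hR : R = 0
    · have : H₂ = 0 := by rw [hH₂, hR, zero_div]
      rw [this]
      show (0 : RatFunc ℝ).num.degree < _
      simp [RatFunc.num_zero, RatFunc.denom_zero]
    · have hRd : R.intDegree < 0 := (strictlyCausal_iff_intDegree_neg hR).mp hRc
      have hle : (1 + R).intDegree ≤ 0 := by
        have := RatFunc.intDegree_add_le hR hR1
        rwa [RatFunc.intDegree_one, max_eq_left hRd.le] at this
      have hge : 0 ≤ (1 + R).intDegree := by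
        have h1 : (1 + R) + (-R) = 1 := by ring
        have := RatFunc.intDegree_add_le (neg_ne_zero.mpr hR)
          (by rw [h1]; exact one_ne_zero)
        rw [h1, RatFunc.intDegree_one, RatFunc.intDegree_neg] at this
        rcases le_max_iff.mp this with h | h
        · exact h
        · omega
      have hRq : (1 + R).intDegree = 0 := le_antisymm hle hge
      have hH₂ne : H₂ ≠ 0 := by
        rw [hH₂]
        exact div_ne_zero hR hR1
      rw [strictlyCausal_iff_intDegree_neg hH₂ne, hH₂, div_eq_mul_inv,
        RatFunc.intDegree_mul hR (inv_ne_zero hR1), intDegree_inv _ hR1, hRq]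
      omega
  · -- TFStable (1 + R)
    intro z hz
    apply hRs z
    have hdvd : (1 + R).denom ∣ R.denom := by
      have := RatFunc.denom_add_dvd 1 R
      rwa [RatFunc.denom_one, one_mul] at this
    have hdvd' : (1 + R).denom.map (algebraMap ℝ ℂ) ∣ R.denom.map (algebraMap ℝ ℂ) :=
      Polynomial.map_dvd _ hdvd
    exact hz.dvd hdvd'
  · -- TFCausal (1 + R)
    by_cases hR : R = 0
    · subst hR
      show (1 + 0 : RatFunc ℝ).num.degree ≤ _
      simp
    · have hRd : R.intDegree < 0 := (strictlyCausal_iff_intDegree_neg hR).mp hRc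
      have hle : (1 + R).intDegree ≤ 0 := by
        have := RatFunc.intDegree_add_le hR hR1
        rwa [RatFunc.intDegree_one, max_eq_left hRd.le] at this
      have h1 : (1 + R).num ≠ 0 := RatFunc.num_ne_zero hR1
      rw [TFCausal, Polynomial.degree_eq_natDegree h1,
        Polynomial.degree_eq_natDegree (1 + R).denom_ne_zero]
      rw [RatFunc.intDegree, sub_nonpos] at hle
      exact_mod_cast hle
  · exact le_of_lt hRc
end

section
/- Parametrization of stabilizing loop-filters (converse direction): if the feedback system with loop-filter (H₁, H₂) is well-posed (H₂ strictly causal) and internally stable (1/(1−H₂), H₁/(1−H₂), H₂/(1−H₂) all stable and causal), then defining R = H₂/(1−H₂) and P = H₁/(1−H₂), one has R ∈ S' (stable and strictly causal), P ∈ S, and H₁ = P/(1+R), H₂ = R/(1+R). -/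
lemma sc_iff (F : RatFunc ℝ) (hF : F ≠ 0) : TFStrictlyCausal F ↔ F.intDegree < 0 := by
  have hn : F.num ≠ 0 := RatFunc.num_ne_zero hF
  rw [TFStrictlyCausal, RatFunc.intDegree, sub_neg,
    Polynomial.degree_eq_natDegree hn, Polynomial.degree_eq_natDegree F.denom_ne_zero]
  exact_mod_cast Iff.rfl

lemma c_iff (F : RatFunc ℝ) (hF : F ≠ 0) : TFCausal F ↔ F.intDegree ≤ 0 := by
  have hn : F.num ≠ 0 := RatFunc.num_ne_zero hF
  rw [TFCausal, RatFunc.intDegree, sub_nonpos,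
    Polynomial.degree_eq_natDegree hn, Polynomial.degree_eq_natDegree F.denom_ne_zero]
  exact_mod_cast Iff.rfl

/-- Parametrization of stabilizing loop-filters (converse direction): if the
feedback system is well-posed (`H₂` strictly causal) and internally stable
(`1/(1-H₂)`, `H₁/(1-H₂)`, `H₂/(1-H₂)` all stable and causal), then
`R := H₂/(1-H₂) ∈ S'`, `P := H₁/(1-H₂) ∈ S`, and `H₁ = P/(1+R)`,
`H₂ = R/(1+R)`. -/
theorem stabilizing_filters_converse (H₁ H₂ : RatFunc ℝ)
    (hwp : TFStrictlyCausal H₂) (hne : 1 - H₂ ≠ 0)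
    (h1s : TFStable (1 / (1 - H₂))) (h1c : TFCausal (1 / (1 - H₂)))
    (h2s : TFStable (H₁ / (1 - H₂))) (h2c : TFCausal (H₁ / (1 - H₂)))
    (h3s : TFStable (H₂ / (1 - H₂))) (h3c : TFCausal (H₂ / (1 - H₂)))
    (R P : RatFunc ℝ) (hR : R = H₂ / (1 - H₂)) (hP : P = H₁ / (1 - H₂)) :
    TFStable R ∧ TFCausal R ∧ TFStrictlyCausal R ∧
    TFStable P ∧ TFCausal P ∧
    H₁ = P / (1 + R) ∧ H₂ = R / (1 + R) := by
  have hinv : (1 : RatFunc ℝ) / (1 - H₂) ≠ 0 := one_div_ne_zero hne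
  have hone : (1 : RatFunc ℝ) + R = 1 / (1 - H₂) := by
    rw [hR]; field_simp; ring
  -- strict causality of R
  have hRsc : TFStrictlyCausal R := by
    by_cases h2z : H₂ = 0
    · have : R = 0 := by simp [hR, h2z]
      rw [this]
      simp [TFStrictlyCausal, RatFunc.num_zero, RatFunc.denom_zero]
    · have hRne : R ≠ 0 := by
        rw [hR]; exact div_ne_zero h2z hne
      have hmul : R = H₂ * (1 / (1 - H₂)) := by rw [hR]; ring
      rw [sc_iff R hRne, hmul, RatFunc.intDegree_mul h2z hinv]
      have a1 : H₂.intDegree < 0 := (sc_iff H₂ h2z).mp hwp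
      have a2 : (1 / (1 - H₂) : RatFunc ℝ).intDegree ≤ 0 := (c_iff _ hinv).mp h1c
      omega
  refine ⟨hR ▸ h3s, hR ▸ h3c, hRsc, hP ▸ h2s, hP ▸ h2c, ?_, ?_⟩
  · rw [hP, hone]
    field_simp
  · rw [hone, hR]
    field_simp
end
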